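/- arXiv:math-ph/0702031 — 7 statements merged into one kernel-verified Lean document; each statement's English description precedes it below -/
import Mathlib

section
/- Let n ≥ 2 be an integer and let c, s > 0 be real numbers; set α = s/(2c). For λ ∈ ℝ^{n-1} define p_L(λ) = A · ∏_{1≤i<j≤n-1}|λ_j − λ_i| · exp( −(1/(4c)) [ ∑_{i=1}^{n-1} λ_i² − (∑_{i=1}^{n-1} λ_i)²/(n+1) ] ), where A = 2^{(2−7(n−1)−(n−1)²)/4} / ( √(n+1) · c^{n(n−1)/4} · ∏_{i=1}^{n-1} Γ(1 + i/2) ); and for u > 0 define p_N(u) = 2 u^{n−1} exp(−u²/(2s)) / ( (2s)^{n/2} Γ(n/2) ). Then for every κ ∈ ℝ^{n-1}: ∫_0^∞ u^{n−1} p_L(uκ) p_N(u) du = [ 2^{(n²−7n+8)/4} Γ(n(n+1)/4) / ( √(n+1) Γ(n/2) ∏_{i=1}^{n-1} Γ(1 + i/2) ) ] · α^{n(n−1)/4} · ∏_{1≤i<j≤n-1}|κ_j − κ_i| / ( α [ ∑_{i=1}^{n-1} κ_i² − (∑_{i=1}^{n-1} κ_i)²/(n+1) ] + 1 )^{(n²+n)/4}.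 -/
/-!
After the substitution `λ = u κ` the Vandermonde factor is homogeneous of degree
`(n-1)(n-2)/2` and the quadratic form in the exponent of degree `2`, so the integrand is a
constant times `u ^ M * exp (-b u²)` with `M = (n-1)(n+2)/2` and `b = (α Q(κ) + 1) / (2s)`.
The Gaussian moment `∫₀^∞ u^M e^{-b u²} du = Γ((M+1)/2) / (2 b^{(M+1)/2})` with
`(M+1)/2 = n(n+1)/4` then gives the closed form after collecting powers of `2`, `c` and `s`.
-/

open scoped Real
open Finset MeasureTheory Set Real

theorem prod_prod_Ioi_abs_mul_sub_mul {ι : Type*} [Fintype ι] [LinearOrder ι]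
    [LocallyFiniteOrderTop ι] (u : ℝ) (x : ι → ℝ) :
    ∏ i, ∏ j ∈ Ioi i, |u * x j - u * x i| =
      |u| ^ (∑ i : ι, #(Ioi i)) * ∏ i, ∏ j ∈ Ioi i, |x j - x i| := by
  simp_rw [← mul_sub, abs_mul, prod_mul_distrib, prod_const, prod_pow_eq_pow_sum]

theorem Fin.cast_sum_card_Ioi (m : ℕ) :
    ((∑ i : Fin m, #(Ioi i) : ℕ) : ℝ) = m * (m - 1) / 2 := by
  have h : (∑ i : Fin m, #(Ioi i)) * 2 = m * (m - 1) := by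
    simp_rw [Fin.card_Ioi]
    rw [Fin.sum_univ_eq_sum_range (fun i => m - 1 - i) m, sum_range_reflect (fun i => i) m,
      sum_range_id_mul_two]
  rcases m with _ | m
  · simp
  · have h' := congrArg (Nat.cast : ℕ → ℝ) h
    push_cast at h' ⊢
    linarith

theorem sum_mul_sq_sub_sq_sum_mul_div {ι : Type*} (s : Finset ι) (u N : ℝ) (x : ι → ℝ) :
    ∑ i ∈ s, (u * x i) ^ 2 - (∑ i ∈ s, u * x i) ^ 2 / N =
      u ^ 2 * (∑ i ∈ s, x i ^ 2 - (∑ i ∈ s, x i) ^ 2 / N) := by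
  simp_rw [mul_pow, ← mul_sum]
  ring

theorem sq_sum_div_le_sum_sq {ι : Type*} (s : Finset ι) (f : ι → ℝ) {N : ℝ}
    (hN : (#s : ℝ) ≤ N) : (∑ i ∈ s, f i) ^ 2 / N ≤ ∑ i ∈ s, f i ^ 2 := by
  have hsq : 0 ≤ ∑ i ∈ s, f i ^ 2 := by positivity
  refine div_le_of_le_mul₀ ((#s).cast_nonneg.trans hN) hsq ?_
  calc (∑ i ∈ s, f i) ^ 2 ≤ #s * ∑ i ∈ s, f i ^ 2 := sq_sum_le_card_mul_sum_sq
    _ ≤ (∑ i ∈ s, f i ^ 2) * N := by rw [mul_comm]; gcongr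

theorem integral_pow_mul_exp_neg_mul_sq (k : ℕ) {b : ℝ} (hb : 0 < b) :
    ∫ u in Ioi (0 : ℝ), u ^ k * exp (-b * u ^ 2) =
      b ^ (-((k : ℝ) + 1) / 2) * Gamma (((k : ℝ) + 1) / 2) / 2 := by
  have h := integral_rpow_mul_exp_neg_mul_rpow two_pos
    (by linarith [k.cast_nonneg (α := ℝ)] : (-1 : ℝ) < k) hb
  simp only [rpow_natCast, rpow_two] at h
  rw [h]
  ring

theorem div_two_mul_rpow_neg {c s T : ℝ} (hc : 0 < c) (hs : 0 < s) (hT : 0 < T) (x : ℝ) :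
    (T / (2 * s)) ^ (-(x * (x + 1) / 4)) = (2 * s) ^ (x / 2) *
      (2 ^ (2 * (x * (x - 1) / 4)) * c ^ (x * (x - 1) / 4) * (s / (2 * c)) ^ (x * (x - 1) / 4)) /
        T ^ ((x ^ 2 + x) / 4) := by
  have h2s : (2 * s) ^ (x * (x - 1) / 4) =
      2 ^ (2 * (x * (x - 1) / 4)) * c ^ (x * (x - 1) / 4) * (s / (2 * c)) ^ (x * (x - 1) / 4) := by
    rw [show 2 * s = 2 ^ (2 : ℝ) * c * (s / (2 * c)) by rw [rpow_two]; field_simp,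
      mul_rpow, mul_rpow, ← rpow_mul] <;> positivity
  rw [rpow_neg (by positivity), div_rpow hT.le (by positivity), inv_div, ← h2s,
    ← rpow_add (by positivity)]
  ring_nf

/-- The density of the principal curvatures: integrating the joint eigenvalue
density `p_L` (of the `(n−1)`-dimensional Hessian) against the χ-type density
`p_N` of the gradient norm yields the closed form of the paper's main theorem. -/
theorem curvature_density_integral (n : ℕ) (hn : 2 ≤ n) (c s : ℝ)
    (hc : 0 < c) (hs : 0 < s) (κ : Fin (n - 1) → ℝ) :
    let A : ℝ :=
      (2 : ℝ) ^ ((2 - 7 * ((n : ℝ) - 1) - ((n : ℝ) - 1) ^ 2) / 4) /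
        (Real.sqrt ((n : ℝ) + 1) * c ^ ((n : ℝ) * ((n : ℝ) - 1) / 4) *
          ∏ i ∈ Finset.Icc 1 (n - 1), Real.Gamma (1 + (i : ℝ) / 2))
    let pL : (Fin (n - 1) → ℝ) → ℝ := fun lam =>
      A * (∏ i : Fin (n - 1), ∏ j ∈ Finset.Ioi i, |lam j - lam i|) *
        Real.exp (-(1 / (4 * c)) *
          (∑ i, lam i ^ 2 - (∑ i, lam i) ^ 2 / ((n : ℝ) + 1)))
    let pN : ℝ → ℝ := fun u =>
      2 * u ^ (n - 1) * Real.exp (-u ^ 2 / (2 * s)) /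
        ((2 * s) ^ ((n : ℝ) / 2) * Real.Gamma ((n : ℝ) / 2))
    let α : ℝ := s / (2 * c)
    (∫ u in Set.Ioi (0 : ℝ), u ^ (n - 1) * pL (fun i => u * κ i) * pN u) =
      (2 : ℝ) ^ (((n : ℝ) ^ 2 - 7 * n + 8) / 4) *
          Real.Gamma ((n : ℝ) * ((n : ℝ) + 1) / 4) /
          (Real.sqrt ((n : ℝ) + 1) * Real.Gamma ((n : ℝ) / 2) *
            ∏ i ∈ Finset.Icc 1 (n - 1), Real.Gamma (1 + (i : ℝ) / 2)) *
        α ^ ((n : ℝ) * ((n : ℝ) - 1) / 4) *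
        (∏ i : Fin (n - 1), ∏ j ∈ Finset.Ioi i, |κ j - κ i|) /
        (α * (∑ i, κ i ^ 2 - (∑ i, κ i) ^ 2 / ((n : ℝ) + 1)) + 1) ^
          (((n : ℝ) ^ 2 + n) / 4) := by
  intro A pL pN α
  have hn1 : ((n - 1 : ℕ) : ℝ) = n - 1 := by rw [Nat.cast_sub (by omega), Nat.cast_one]
  set P := ∏ i : Fin (n - 1), ∏ j ∈ Ioi i, |κ j - κ i|
  set Q := ∑ i, κ i ^ 2 - (∑ i, κ i) ^ 2 / ((n : ℝ) + 1)
  set T := α * Q + 1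
  set M := (n - 1) + ∑ i : Fin (n - 1), #(Ioi i) + (n - 1)
  have hM : ((M : ℝ) + 1) / 2 = n * (n + 1) / 4 := by
    simp only [M, Nat.cast_add, Fin.cast_sum_card_Ioi, hn1]
    ring
  have hT : 0 < T := by
    have : 0 ≤ Q := sub_nonneg.2 (sq_sum_div_le_sum_sq _ _ (by simp [hn1]; linarith))
    positivity
  have hintegrand : ∀ u ∈ Ioi (0 : ℝ), u ^ (n - 1) * pL (fun i => u * κ i) * pN u =
      A * P * 2 / ((2 * s) ^ ((n : ℝ) / 2) * Gamma ((n : ℝ) / 2)) *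
        (u ^ M * exp (-(T / (2 * s)) * u ^ 2)) := fun u hu => by
    have hexp : -(1 / (4 * c)) * (∑ i, (u * κ i) ^ 2 - (∑ i, u * κ i) ^ 2 / ((n : ℝ) + 1)) +
        -u ^ 2 / (2 * s) = -(T / (2 * s)) * u ^ 2 := by
      rw [sum_mul_sq_sub_sq_sum_mul_div]
      simp only [T, Q, α]
      field_simp
      ring
    simp only [pL, pN, prod_prod_Ioi_abs_mul_sub_mul, abs_of_pos (mem_Ioi.1 hu), ← hexp, exp_add]
    ring
  have htwo : (2 : ℝ) ^ ((2 - 7 * ((n : ℝ) - 1) - ((n : ℝ) - 1) ^ 2) / 4) *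
      2 ^ (2 * ((n : ℝ) * (n - 1) / 4)) = 2 ^ (((n : ℝ) ^ 2 - 7 * n + 8) / 4) := by
    rw [← rpow_add two_pos]
    ring_nf
  rw [setIntegral_congr_fun measurableSet_Ioi hintegrand, integral_const_mul,
    integral_pow_mul_exp_neg_mul_sq M (by positivity), neg_div, hM,
    div_two_mul_rpow_neg hc hs hT, ← htwo]
  have : 0 < ∏ i ∈ Finset.Icc 1 (n - 1), Gamma (1 + (i : ℝ) / 2) :=
    prod_pos fun i _ => Gamma_pos_of_pos (by positivity)
  have : 0 < Gamma ((n : ℝ) / 2) := Gamma_pos_of_pos (by positivity)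
  simp only [A, α]
  field_simp
end

section
/- Let n ≥ 1, let c > 0 be real, let R be an (n,n) real orthogonal matrix (RᵀR = I_n), and let λ ∈ ℝⁿ with Λ = diag(λ). Let Σ = c · D_n⁺ M_n D_n⁺ᵀ (an invertible (n(n+1)/2, n(n+1)/2) matrix), let Σ̃ = c(2 I_n + 1_n 1_nᵀ) where 1_n is the all-ones vector, and let h = vech(Rᵀ Λ R). Then hᵀ Σ⁻¹ h = λᵀ Σ̃⁻¹ λ = (1/(2c)) [ ∑_{i=1}^n λ_i² − (∑_{i=1}^n λ_i)²/(n+2) ]. -/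
/-!
The duplication matrix satisfies `D_nᵀ D_n = diag m`, where `m` is `1` at diagonal positions and
`2` elsewhere, `C_n D_n = D_n`, and `D_nᵀ vec I = vech I =: u`. Hence
`Σ = c (2 (diag m)⁻¹ + u uᵀ)`, and `Σ̃` has the same shape with `m = 1`, `u = 1`. Since `m = 1` on
the support of `u`, a Sherman–Morrison computation gives
`Σ⁻¹ = (2c)⁻¹ (diag m - (uᵀu + 2)⁻¹ u uᵀ)`. For `h = vech S` with `S = Rᵀ Λ R` one has
`hᵀ diag(m) h = ‖vec S‖² = tr (SᵀS) = ∑ λᵢ²`, `uᵀh = tr S = ∑ λᵢ` and `uᵀu = n`.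
-/

open Matrix

/-- Column-stacking `vec` of a square matrix, indexed by pairs `(i, j)` with
`(vec T) (i, j) = T i j`. -/
def vecM {n : ℕ} (T : Matrix (Fin n) (Fin n) ℝ) : Fin n × Fin n → ℝ :=
  fun p => T p.1 p.2

/-- The commutation matrix `C_n`, satisfying `C_n (vec T) = vec Tᵀ`. -/
def commMat (n : ℕ) : Matrix (Fin n × Fin n) (Fin n × Fin n) ℝ :=
  Matrix.of fun p q => if p.1 = q.2 ∧ p.2 = q.1 then 1 else 0

/-- The matrix `M_n = I_{n²} + C_n + (vec I_n)(vec I_n)ᵀ`. -/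
def Mmat (n : ℕ) : Matrix (Fin n × Fin n) (Fin n × Fin n) ℝ :=
  1 + commMat n + Matrix.vecMulVec (vecM (1 : Matrix (Fin n) (Fin n) ℝ))
    (vecM (1 : Matrix (Fin n) (Fin n) ℝ))


/-- Index set for the half-vectorization: pairs `(i, j)` with `i ≥ j`. -/
abbrev SymIdx (n : ℕ) := {p : Fin n × Fin n // p.2 ≤ p.1}

/-- Half-vectorization `vech`: the entries `S i j` with `i ≥ j`. -/
def vechM {n : ℕ} (S : Matrix (Fin n) (Fin n) ℝ) : SymIdx n → ℝ :=
  fun q => S q.1.1 q.1.2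

/-- The duplication matrix `D_n`, satisfying `D_n (vech S) = vec S` for every
symmetric `S`. -/
def dupMat (n : ℕ) : Matrix (Fin n × Fin n) (SymIdx n) ℝ :=
  Matrix.of fun p q => if p = q.1 ∨ p = (q.1.2, q.1.1) then 1 else 0

/-- The Moore–Penrose inverse `D_n⁺ = (D_nᵀ D_n)⁻¹ D_nᵀ` of the duplication
matrix. -/
noncomputable def dupPinv (n : ℕ) : Matrix (SymIdx n) (Fin n × Fin n) ℝ :=
  ((dupMat n)ᵀ * dupMat n)⁻¹ * (dupMat n)ᵀ


section RankOne

variable {ι : Type*} [Fintype ι] [DecidableEq ι] {c : ℝ} {w u : ι → ℝ}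

theorem inv_smul_two_smul_diagonal_inv_add_vecMulVec (hc : c ≠ 0) (hw : ∀ i, w i ≠ 0)
    (hwu : w * u = u) :
    (c • ((2 : ℝ) • diagonal w⁻¹ + vecMulVec u u))⁻¹ =
      (2 * c)⁻¹ • (diagonal w - (u ⬝ᵥ u + 2)⁻¹ • vecMulVec u u) := by
  have hs : u ⬝ᵥ u + 2 ≠ 0 := by
    have := dotProduct_self_star_nonneg u
    positivity
  have hww : diagonal w⁻¹ * diagonal w = 1 := by
    rw [diagonal_mul_diagonal, ← diagonal_one]
    exact congrArg diagonal (funext fun i => inv_mul_cancel₀ (hw i))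
  have hwu' : diagonal w⁻¹ *ᵥ u = u := by
    ext i
    rw [mulVec_diagonal, Pi.inv_apply, inv_mul_eq_iff_eq_mul₀ (hw i)]
    exact (congrFun hwu i).symm
  have huw : u ᵥ* diagonal w = u := by
    ext i
    rw [vecMul_diagonal, mul_comm]
    exact congrFun hwu i
  apply inv_eq_right_inv
  rw [smul_mul_smul_comm, add_mul, mul_sub, mul_sub, Matrix.smul_mul, Matrix.smul_mul,
    Matrix.mul_smul, Matrix.mul_smul, hww, mul_vecMulVec, hwu', vecMulVec_mul, huw,
    vecMulVec_mul_vecMulVec, vecMulVec_smul]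
  match_scalars <;> field_simp
  ring

theorem dotProduct_inv_smul_two_smul_diagonal_inv_add_vecMulVec_mulVec (hc : c ≠ 0)
    (hw : ∀ i, w i ≠ 0) (hwu : w * u = u) (x : ι → ℝ) :
    x ⬝ᵥ (c • ((2 : ℝ) • diagonal w⁻¹ + vecMulVec u u))⁻¹ *ᵥ x =
      1 / (2 * c) * (x ⬝ᵥ diagonal w *ᵥ x - (u ⬝ᵥ x) ^ 2 / (u ⬝ᵥ u + 2)) := by
  rw [inv_smul_two_smul_diagonal_inv_add_vecMulVec hc hw hwu, smul_mulVec, sub_mulVec,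
    smul_mulVec, vecMulVec_mulVec, dotProduct_smul, dotProduct_sub, dotProduct_smul,
    op_smul_eq_smul, dotProduct_smul, dotProduct_comm x u]
  simp only [smul_eq_mul]
  ring

end RankOne

section Duplication

variable {n : ℕ}

/-- The number of entries of `vec S` that are copies of the entry `q` of `vech S`. -/
def vechMultiplicity (n : ℕ) : SymIdx n → ℝ := fun q => if q.1.1 = q.1.2 then 1 else 2

theorem vechMultiplicity_ne_zero (q : SymIdx n) : vechMultiplicity n q ≠ 0 := by
  unfold vechMultiplicity
  split_ifs <;> norm_num

theorem vechMultiplicity_mul_vechM_one : vechMultiplicity n * vechM 1 = vechM 1 := by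
  ext q
  simp only [Pi.mul_apply, vechMultiplicity, vechM, one_apply]
  split_ifs <;> simp

theorem vechMultiplicity_inv_mul_vechM_one : (vechMultiplicity n)⁻¹ * vechM 1 = vechM 1 := by
  ext q
  simp only [Pi.mul_apply, Pi.inv_apply, vechMultiplicity, vechM, one_apply]
  split_ifs <;> simp

theorem exists_symIdx_eq_or_eq_swap (p : Fin n × Fin n) :
    ∃ q : SymIdx n, p = q.1 ∨ p = q.1.swap := by
  rcases le_total p.2 p.1 with h | h
  · exact ⟨⟨p, h⟩, Or.inl rfl⟩
  · exact ⟨⟨p.swap, h⟩, Or.inr rfl⟩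

theorem dupMat_swap_apply (p : Fin n × Fin n) (q : SymIdx n) :
    dupMat n p.swap q = dupMat n p q := by
  simp only [dupMat, of_apply, Prod.ext_iff, Prod.fst_swap, Prod.snd_swap]
  congr 1
  exact propext (by tauto)

theorem dupMat_apply_val (q q' : SymIdx n) : dupMat n q.1 q' = if q = q' then 1 else 0 := by
  obtain ⟨⟨i, j⟩, hij⟩ := q
  obtain ⟨⟨k, l⟩, hkl⟩ := q'
  simp only [dupMat, of_apply, Subtype.mk.injEq, Prod.ext_iff, Fin.ext_iff] at *
  simp only [Fin.le_def] at hij hkl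
  congr 1
  apply propext
  omega

theorem dupMat_transpose_mulVec_apply (x : Fin n × Fin n → ℝ) (q : SymIdx n) :
    ((dupMat n)ᵀ *ᵥ x) q = if q.1.1 = q.1.2 then x q.1 else x q.1 + x q.1.swap := by
  simp only [mulVec, dotProduct, transpose_apply, dupMat, of_apply, ite_mul, one_mul, zero_mul]
  simp only [show ∀ p, (p = q.1 ∨ p = (q.1.2, q.1.1)) ↔ p ∈ ({q.1, q.1.swap} : Finset _) from
    fun p => by rw [Finset.mem_insert, Finset.mem_singleton]; rfl,
    Finset.sum_ite_mem, Finset.univ_inter]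
  split_ifs with h
  · rw [show q.1.swap = q.1 from Prod.ext h.symm h, Finset.pair_eq_singleton, Finset.sum_singleton]
  · exact Finset.sum_pair fun h' => h (congrArg Prod.fst h')

theorem dupMat_transpose_mul_dupMat :
    (dupMat n)ᵀ * dupMat n = diagonal (vechMultiplicity n) := by
  ext q q'
  change ((dupMat n)ᵀ *ᵥ fun p => dupMat n p q') q = _
  rw [dupMat_transpose_mulVec_apply, dupMat_swap_apply, dupMat_apply_val, diagonal_apply,
    vechMultiplicity]
  split_ifs <;> norm_num

theorem dupMat_mulVec_vechM {S : Matrix (Fin n) (Fin n) ℝ} (hS : S.IsSymm) :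
    dupMat n *ᵥ vechM S = vecM S := by
  have hval (q : SymIdx n) : (dupMat n *ᵥ vechM S) q.1 = S q.1.1 q.1.2 := by
    simp [mulVec, dotProduct, dupMat_apply_val, vechM]
  ext p
  obtain ⟨q, rfl | rfl⟩ := exists_symIdx_eq_or_eq_swap p
  · exact hval q
  · simp only [mulVec, dotProduct, dupMat_swap_apply]
    exact (hval q).trans (hS.apply _ _).symm

theorem commMat_mul_apply {α : Type*} (A : Matrix (Fin n × Fin n) α ℝ) (p : Fin n × Fin n)
    (a : α) : (commMat n * A) p a = A p.swap a := by
  simp only [mul_apply, commMat, of_apply, ite_mul, one_mul, zero_mul]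
  rw [Fintype.sum_eq_single p.swap fun x hx => if_neg fun h => hx (Prod.ext h.2.symm h.1.symm)]
  exact if_pos ⟨rfl, rfl⟩

theorem commMat_mul_dupMat : commMat n * dupMat n = dupMat n := by
  ext p q
  rw [commMat_mul_apply, dupMat_swap_apply]

theorem dupMat_transpose_mulVec_vecM_one : (dupMat n)ᵀ *ᵥ vecM 1 = vechM 1 := by
  ext q
  rw [dupMat_transpose_mulVec_apply]
  split_ifs with h
  · rfl
  · simp [vecM, vechM, one_apply, h, Ne.symm h]

theorem dupMat_transpose_mul_Mmat_mul_dupMat :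
    (dupMat n)ᵀ * Mmat n * dupMat n =
      (2 : ℝ) • diagonal (vechMultiplicity n) + vecMulVec (vechM 1) (vechM 1) := by
  rw [Mmat, Matrix.mul_add, Matrix.mul_add, Matrix.add_mul, Matrix.add_mul, Matrix.mul_one,
    Matrix.mul_assoc _ (commMat n), commMat_mul_dupMat, mul_vecMulVec, vecMulVec_mul,
    ← mulVec_transpose, dupMat_transpose_mulVec_vecM_one, dupMat_transpose_mul_dupMat, two_smul]

theorem dupPinv_eq : dupPinv n = diagonal (vechMultiplicity n)⁻¹ * (dupMat n)ᵀ := by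
  rw [dupPinv, dupMat_transpose_mul_dupMat]
  congr 1
  apply inv_eq_left_inv
  rw [diagonal_mul_diagonal, ← diagonal_one]
  exact congrArg diagonal (funext fun q => inv_mul_cancel₀ (vechMultiplicity_ne_zero q))

theorem dupPinv_mul_Mmat_mul_dupPinv_transpose :
    dupPinv n * Mmat n * (dupPinv n)ᵀ =
      (2 : ℝ) • diagonal (vechMultiplicity n)⁻¹ + vecMulVec (vechM 1) (vechM 1) := by
  have hu : diagonal (vechMultiplicity n)⁻¹ *ᵥ vechM 1 = vechM 1 := by
    ext q
    rw [mulVec_diagonal, ← Pi.mul_apply, vechMultiplicity_inv_mul_vechM_one]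
  rw [dupPinv_eq, transpose_mul, transpose_transpose, diagonal_transpose]
  set Dinv := diagonal (vechMultiplicity n)⁻¹
  calc Dinv * (dupMat n)ᵀ * Mmat n * (dupMat n * Dinv)
      = Dinv * ((dupMat n)ᵀ * Mmat n * dupMat n) * Dinv := by simp only [Matrix.mul_assoc]
    _ = _ := by
      rw [dupMat_transpose_mul_Mmat_mul_dupMat, Matrix.mul_add, Matrix.add_mul, Matrix.mul_smul,
        Matrix.smul_mul, diagonal_mul_diagonal, diagonal_mul_diagonal, mul_vecMulVec, hu,
        vecMulVec_mul, ← mulVec_transpose, diagonal_transpose, hu]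
      congr 2
      exact congrArg diagonal <| funext fun q => by
        rw [Pi.inv_apply, inv_mul_cancel₀ (vechMultiplicity_ne_zero q), one_mul]

theorem vecM_dotProduct_vecM (A B : Matrix (Fin n) (Fin n) ℝ) :
    vecM A ⬝ᵥ vecM B = trace (Aᵀ * B) := by
  simp only [dotProduct, vecM, trace, diag, mul_apply, transpose_apply, Fintype.sum_prod_type]
  exact Finset.sum_comm

theorem vechM_dotProduct_diagonal_mulVec_vechM {A S : Matrix (Fin n) (Fin n) ℝ} (hA : A.IsSymm)
    (hS : S.IsSymm) :
    vechM A ⬝ᵥ diagonal (vechMultiplicity n) *ᵥ vechM S = trace (Aᵀ * S) := by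
  rw [← dupMat_transpose_mul_dupMat, ← mulVec_mulVec, dotProduct_mulVec, vecMul_transpose,
    dupMat_mulVec_vechM hA, dupMat_mulVec_vechM hS, vecM_dotProduct_vecM]

theorem vechM_one_dotProduct_vechM {S : Matrix (Fin n) (Fin n) ℝ} (hS : S.IsSymm) :
    vechM 1 ⬝ᵥ vechM S = trace S := by
  have hu : vechM 1 ᵥ* diagonal (vechMultiplicity n) = vechM 1 := by
    ext q
    rw [vecMul_diagonal, mul_comm, ← Pi.mul_apply, vechMultiplicity_mul_vechM_one]
  rw [← hu, ← dotProduct_mulVec, vechM_dotProduct_diagonal_mulVec_vechM isSymm_one hS,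
    transpose_one, Matrix.one_mul]

end Duplication

section Orthogonal

variable {m : Type*} [Fintype m] [DecidableEq m] {R : Matrix m m ℝ}

theorem trace_transpose_mul_mul_of_transpose_mul_eq_one (hR : Rᵀ * R = 1) (A : Matrix m m ℝ) :
    trace (Rᵀ * A * R) = trace A := by
  rw [trace_mul_cycle, mul_eq_one_comm.mp hR, Matrix.one_mul]

theorem trace_transpose_mul_self_conj_of_transpose_mul_eq_one (hR : Rᵀ * R = 1)
    (A : Matrix m m ℝ) :
    trace ((Rᵀ * A * R)ᵀ * (Rᵀ * A * R)) = trace (Aᵀ * A) := by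
  have hconj : (Rᵀ * A * R)ᵀ * (Rᵀ * A * R) = Rᵀ * (Aᵀ * A) * R := by
    simp only [transpose_mul, transpose_transpose, Matrix.mul_assoc]
    rw [← Matrix.mul_assoc R, mul_eq_one_comm.mp hR, Matrix.one_mul]
  rw [hconj, trace_transpose_mul_mul_of_transpose_mul_eq_one hR]

end Orthogonal

theorem quadratic_form_eigenvalues_general (n : ℕ) (c : ℝ) (hc : 0 < c)
    (R : Matrix (Fin n) (Fin n) ℝ) (hR : Rᵀ * R = 1) (lam : Fin n → ℝ) :
    let Sigma : Matrix (SymIdx n) (SymIdx n) ℝ :=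
      c • (dupPinv n * Mmat n * (dupPinv n)ᵀ)
    let SigmaTilde : Matrix (Fin n) (Fin n) ℝ :=
      c • ((2 : ℝ) • (1 : Matrix (Fin n) (Fin n) ℝ) +
        Matrix.vecMulVec (fun _ => (1 : ℝ)) (fun _ => (1 : ℝ)))
    let h : SymIdx n → ℝ := vechM (Rᵀ * Matrix.diagonal lam * R)
    h ⬝ᵥ Sigma⁻¹.mulVec h = lam ⬝ᵥ SigmaTilde⁻¹.mulVec lam ∧
    lam ⬝ᵥ SigmaTilde⁻¹.mulVec lam =
      (1 / (2 * c)) * (∑ i, lam i ^ 2 - (∑ i, lam i) ^ 2 / ((n : ℝ) + 2)) := by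
  intro Sigma SigmaTilde h
  have hSymm : (Rᵀ * diagonal lam * R).IsSymm := by
    rw [IsSymm, transpose_mul, transpose_mul, transpose_transpose, diagonal_transpose,
      Matrix.mul_assoc]
  have hTilde : lam ⬝ᵥ SigmaTilde⁻¹ *ᵥ lam =
      1 / (2 * c) * (∑ i, lam i ^ 2 - (∑ i, lam i) ^ 2 / ((n : ℝ) + 2)) := by
    have hform : SigmaTilde = c • ((2 : ℝ) • diagonal (1 : Fin n → ℝ)⁻¹ + vecMulVec 1 1) := by
      simp only [SigmaTilde, inv_one]
      rfl
    rw [hform, dotProduct_inv_smul_two_smul_diagonal_inv_add_vecMulVec_mulVec (w := 1) hc.ne'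
      (fun _ => one_ne_zero) (one_mul 1)]
    simp [dotProduct, sq]
  refine ⟨?_, hTilde⟩
  rw [hTilde, show Sigma = _ from congrArg (c • ·) dupPinv_mul_Mmat_mul_dupPinv_transpose,
    dotProduct_inv_smul_two_smul_diagonal_inv_add_vecMulVec_mulVec hc.ne'
      vechMultiplicity_ne_zero vechMultiplicity_mul_vechM_one,
    vechM_dotProduct_diagonal_mulVec_vechM hSymm hSymm, vechM_one_dotProduct_vechM hSymm,
    vechM_one_dotProduct_vechM isSymm_one,
    trace_transpose_mul_self_conj_of_transpose_mul_eq_one hR,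
    trace_transpose_mul_mul_of_transpose_mul_eq_one hR]
  simp [sq]

/-- With `h = vech(Rᵀ Λ R)`, `Σ = c D_n⁺ M_n D_n⁺ᵀ` and
`Σ̃ = c (2 I_n + 1_n 1_nᵀ)`, one has
`hᵀ Σ⁻¹ h = λᵀ Σ̃⁻¹ λ = (1/(2c)) [∑ λ_i² − (∑ λ_i)²/(n+2)]`. -/
theorem quadratic_form_eigenvalues (n : ℕ) (hn : 1 ≤ n) (c : ℝ) (hc : 0 < c)
    (R : Matrix (Fin n) (Fin n) ℝ) (hR : Rᵀ * R = 1) (lam : Fin n → ℝ) :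
    let Sigma : Matrix (SymIdx n) (SymIdx n) ℝ :=
      c • (dupPinv n * Mmat n * (dupPinv n)ᵀ)
    let SigmaTilde : Matrix (Fin n) (Fin n) ℝ :=
      c • ((2 : ℝ) • (1 : Matrix (Fin n) (Fin n) ℝ) +
        Matrix.vecMulVec (fun _ => (1 : ℝ)) (fun _ => (1 : ℝ)))
    let h : SymIdx n → ℝ := vechM (Rᵀ * Matrix.diagonal lam * R)
    h ⬝ᵥ Sigma⁻¹.mulVec h = lam ⬝ᵥ SigmaTilde⁻¹.mulVec lam ∧
    lam ⬝ᵥ SigmaTilde⁻¹.mulVec lam =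
      (1 / (2 * c)) * (∑ i, lam i ^ 2 - (∑ i, lam i) ^ 2 / ((n : ℝ) + 2)) :=
  quadratic_form_eigenvalues_general n c hc R hR lam
end

section
/- Let n, m ≥ 1 be integers, let c > 0 be real, and let Q be an (n,m) real matrix with QᵀQ = I_m. Let μ be the centered multivariate Gaussian measure on ℝ^{n²} with covariance matrix c·M_n (which is positive semidefinite). Then the pushforward of μ under the linear map x ↦ (Qᵀ ⊗ Qᵀ) x equals the centered multivariate Gaussian measure on ℝ^{m²} with covariance matrix c·M_m. -/
open Matrix

open MeasureTheory ProbabilityTheory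

/-- The centered multivariate Gaussian measure on `ι → ℝ` with (positive
semidefinite) covariance matrix `S`: the pushforward of the standard Gaussian
product measure under the square root of `S`. -/
noncomputable def centeredGaussian {ι : Type*} [Fintype ι] [DecidableEq ι]
    (S : Matrix ι ι ℝ) (hS : S.PosSemidef) : Measure (ι → ℝ) :=
  (Measure.pi fun _ : ι => gaussianReal 0 1).map fun x =>
    ((hS.1.eigenvectorUnitary.1 * diagonal (Real.sqrt ∘ hS.1.eigenvalues) *
      (star hS.1.eigenvectorUnitary : Matrix ι ι ℝ))).mulVec x

/-! `centeredGaussian S` is Mathlib's `multivariateGaussian 0 S` read in coordinates, since both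
are the image of the standard Gaussian under the square root of `S`. The image of a centered
Gaussian with covariance `S` under a linear map `A` is again a centered Gaussian, of covariance
`A S Aᵀ`, and a Gaussian measure is determined by its mean and covariance. For `A = Qᵀ ⊗ Qᵀ` one has `A Aᵀ = QᵀQ ⊗ QᵀQ = 1`, `A C_n = C_m A` and
`A vec I_n = vec (QᵀQ) = vec I_m`, hence `A M_n Aᵀ = M_m`. -/

open scoped MatrixOrder

lemma Matrix.PosSemidef.cfcSqrt_eq_spectral {ι : Type*} [Fintype ι] [DecidableEq ι]
    {S : Matrix ι ι ℝ} (hS : S.PosSemidef) :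
    CFC.sqrt S = hS.1.eigenvectorUnitary.1 * diagonal (Real.sqrt ∘ hS.1.eigenvalues) *
      (star hS.1.eigenvectorUnitary : Matrix ι ι ℝ) := by
  rw [CFC.sqrt_eq_real_sqrt S hS.nonneg, cfcₙ_eq_cfc, hS.1.cfc_eq, IsHermitian.cfc,
    Unitary.conjStarAlgAut_apply]
  rfl

section

variable {ι κ : Type*} [Fintype ι] [DecidableEq ι] [Fintype κ] [DecidableEq κ]

lemma centeredGaussian_eq_map_ofLp (S : Matrix ι ι ℝ) (hS : S.PosSemidef) :
    centeredGaussian S hS = (multivariateGaussian 0 S).map WithLp.ofLp := by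
  rw [multivariateGaussian, ← map_pi_eq_stdGaussian, Measure.map_map (by fun_prop) (by fun_prop),
    Measure.map_map (by fun_prop) (by fun_prop), centeredGaussian, ← hS.cfcSqrt_eq_spectral]
  congr 1
  ext x : 1
  simp

lemma map_toEuclideanLin_multivariateGaussian {S : Matrix ι ι ℝ} (hS : S.PosSemidef)
    (A : Matrix κ ι ℝ) :
    (multivariateGaussian 0 S).map (toEuclideanLin A) =
      multivariateGaussian 0 (A * S * Aᵀ) := by
  have hASA : (A * S * Aᵀ).PosSemidef := by
    simpa using hS.mul_mul_conjTranspose_same A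
  set L := (toEuclideanLin A).toContinuousLinearMap
  have hL : ⇑(toEuclideanLin A) = L := rfl
  rw [hL]
  refine IsGaussian.ext ?_ ?_
  · simp only [id_eq, integral_id_multivariateGaussian]
    rw [ContinuousLinearMap.integral_id_map IsGaussian.integrable_id]
    simp
  · ext u v
    rw [covarianceBilin_map IsGaussian.memLp_two_id, covarianceBilin_multivariateGaussian hS,
      covarianceBilin_multivariateGaussian hASA, ← LinearMap.adjoint_toContinuousLinearMap,
      ← toEuclideanLin_conjTranspose_eq_adjoint]
    simp only [LinearMap.coe_toContinuousLinearMap', ofLp_toLpLin, toLin'_apply,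
      conjTranspose_eq_transpose_of_trivial, ← mulVec_mulVec, dotProduct_mulVec u.ofLp A,
      mulVec_transpose]

lemma map_mulVec_centeredGaussian {S : Matrix ι ι ℝ} (hS : S.PosSemidef) {T : Matrix κ κ ℝ}
    (hT : T.PosSemidef) (A : Matrix κ ι ℝ) (hA : A * S * Aᵀ = T) :
    (centeredGaussian S hS).map A.mulVec = centeredGaussian T hT := by
  have hcomm : A.mulVec ∘ WithLp.ofLp = WithLp.ofLp ∘ toEuclideanLin A := rfl
  rw [centeredGaussian_eq_map_ofLp, centeredGaussian_eq_map_ofLp,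
    Measure.map_map (by fun_prop) (by fun_prop), hcomm,
    ← Measure.map_map (by fun_prop) (by fun_prop), map_toEuclideanLin_multivariateGaussian hS, hA]

end

section

open Kronecker

variable {m n : ℕ}

lemma kronecker_mul_commMat (A B : Matrix (Fin m) (Fin n) ℝ) :
    (A ⊗ₖ B) * commMat n = commMat m * (B ⊗ₖ A) := by
  ext p q
  simp [commMat, Matrix.mul_apply, Fintype.sum_prod_type, ite_and, mul_comm]

lemma kronecker_mulVec_vecM (A B : Matrix (Fin m) (Fin n) ℝ) (T : Matrix (Fin n) (Fin n) ℝ) :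
    (A ⊗ₖ B) *ᵥ vecM T = vecM (A * T * Bᵀ) := by
  ext p
  simp only [vecM, mulVec, dotProduct, Matrix.mul_apply, Fintype.sum_prod_type, kroneckerMap_apply,
    transpose_apply, Finset.sum_mul]
  rw [Finset.sum_comm]
  exact Finset.sum_congr rfl fun j _ => Finset.sum_congr rfl fun i _ => mul_right_comm _ _ _

lemma kronecker_transpose_mul_Mmat_mul_transpose {Q : Matrix (Fin n) (Fin m) ℝ}
    (hQ : Qᵀ * Q = 1) : (Qᵀ ⊗ₖ Qᵀ) * Mmat n * (Qᵀ ⊗ₖ Qᵀ)ᵀ = Mmat m := by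
  have hunit : (Qᵀ ⊗ₖ Qᵀ) * (Qᵀ ⊗ₖ Qᵀ)ᵀ = 1 := by
    rw [← kroneckerMap_transpose, transpose_transpose, ← mul_kronecker_mul, hQ,
      one_kronecker_one]
  have hcomm : (Qᵀ ⊗ₖ Qᵀ) * commMat n * (Qᵀ ⊗ₖ Qᵀ)ᵀ = commMat m := by
    rw [kronecker_mul_commMat, Matrix.mul_assoc, hunit, Matrix.mul_one]
  have hvec : (Qᵀ ⊗ₖ Qᵀ) *ᵥ vecM 1 = vecM (n := m) 1 := by
    rw [kronecker_mulVec_vecM, Matrix.mul_one, transpose_transpose, hQ]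
  have hrankOne : (Qᵀ ⊗ₖ Qᵀ) * vecMulVec (vecM (n := n) 1) (vecM (n := n) 1) * (Qᵀ ⊗ₖ Qᵀ)ᵀ =
      vecMulVec (vecM (n := m) 1) (vecM (n := m) 1) := by
    rw [mul_vecMulVec, vecMulVec_mul, vecMul_transpose, hvec]
  rw [Mmat, Matrix.mul_add, Matrix.mul_add, Matrix.add_mul, Matrix.add_mul, Matrix.mul_one, hunit,
    hcomm, hrankOne, Mmat]

end

open Kronecker in
theorem map_centeredGaussian_kron_general (n m : ℕ)
    (c : ℝ) (Q : Matrix (Fin n) (Fin m) ℝ) (hQ : Qᵀ * Q = 1)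
    (hMn : (c • Mmat n).PosSemidef) (hMm : (c • Mmat m).PosSemidef) :
    (centeredGaussian (c • Mmat n) hMn).map (fun x => (Qᵀ ⊗ₖ Qᵀ).mulVec x) =
      centeredGaussian (c • Mmat m) hMm :=
  map_mulVec_centeredGaussian hMn hMm _ <| by
    rw [Matrix.mul_smul, Matrix.smul_mul, kronecker_transpose_mul_Mmat_mul_transpose hQ]

open Kronecker in
/-- The pushforward of the centered Gaussian with covariance `c M_n` under
`x ↦ (Qᵀ ⊗ Qᵀ) x` is the centered Gaussian with covariance `c M_m`, whenever
`QᵀQ = I_m`. -/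
theorem map_centeredGaussian_kron (n m : ℕ) (hn : 1 ≤ n) (hm : 1 ≤ m)
    (c : ℝ) (hc : 0 < c) (Q : Matrix (Fin n) (Fin m) ℝ) (hQ : Qᵀ * Q = 1)
    (hMn : (c • Mmat n).PosSemidef) (hMm : (c • Mmat m).PosSemidef) :
    (centeredGaussian (c • Mmat n) hMn).map (fun x => (Qᵀ ⊗ₖ Qᵀ).mulVec x) =
      centeredGaussian (c • Mmat m) hMm :=
  map_centeredGaussian_kron_general n m c Q hQ hMn hMm
end

section
/- Let n ≥ 1 and set X = (1/4) ( I_{n²} + C_n − (2/(n+2)) (vec I_n)(vec I_n)ᵀ ). Then X is the Moore–Penrose inverse of M_n; that is, the four Penrose conditions hold: M_n X M_n = M_n, X M_n X = X, (M_n X)ᵀ = M_n X, and (X M_n)ᵀ = X M_n. -/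
open Matrix

/-!
With `C = C_n` and `P = (vec I_n)(vec I_n)ᵀ` one has `C² = 1`, `CP = PC = P` and `P² = nP`, so
`M_n = 1 + C + P` and `X` lie in the commutative algebra spanned by `1, C, P`. There
`M_n X = X M_n = (1 + C)/2`, the orthogonal projection onto `vec` of symmetric matrices, which fixes
both `M_n` and `X`; all four Penrose conditions follow.
-/

section PenroseCandidate

variable {𝕜 A : Type*} [Field 𝕜] [CharZero 𝕜] [Ring A] [Algebra 𝕜 A] {c p : A} {d : 𝕜}

variable (c p d) in
def penroseCandidate : A := (1/4 : 𝕜) • (1 + c - (2 / (d + 2)) • p)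

theorem one_add_add_mul_penroseCandidate (hc : c * c = 1) (hcp : c * p = p) (hpc : p * c = p)
    (hp : p * p = d • p) (hd : d + 2 ≠ 0) :
    (1 + c + p) * penroseCandidate c p d = (1/2 : 𝕜) • (1 + c) := by
  simp only [penroseCandidate, mul_smul_comm, mul_add, mul_sub, add_mul, mul_one, one_mul,
    hc, hcp, hpc, hp]
  match_scalars <;> field_simp <;> ring

theorem penroseCandidate_mul_one_add_add (hc : c * c = 1) (hcp : c * p = p) (hpc : p * c = p)
    (hp : p * p = d • p) (hd : d + 2 ≠ 0) :
    penroseCandidate c p d * (1 + c + p) = (1/2 : 𝕜) • (1 + c) := by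
  simp only [penroseCandidate, smul_mul_assoc, mul_add, sub_mul, add_mul, mul_one, one_mul,
    hc, hcp, hpc, hp]
  match_scalars <;> field_simp <;> ring

theorem one_add_add_mul_half_one_add (hc : c * c = 1) (hpc : p * c = p) :
    (1 + c + p) * ((1/2 : 𝕜) • (1 + c)) = 1 + c + p := by
  simp only [mul_smul_comm, mul_add, add_mul, mul_one, one_mul, hc, hpc]
  match_scalars <;> field_simp <;> ring

theorem half_one_add_mul_penroseCandidate (hc : c * c = 1) (hcp : c * p = p) :
    ((1/2 : 𝕜) • (1 + c)) * penroseCandidate c p d = penroseCandidate c p d := by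
  simp only [penroseCandidate, smul_mul_assoc, mul_smul_comm, mul_add, add_mul, mul_sub, mul_one,
    one_mul, hc, hcp]
  match_scalars <;> field_simp <;> ring

end PenroseCandidate

theorem commMat_transpose (n : ℕ) : (commMat n)ᵀ = commMat n := by
  ext p q
  simp only [commMat, transpose_apply, of_apply, eq_comm, and_comm]

theorem commMat_mul_self (n : ℕ) : commMat n * commMat n = 1 := by
  ext p q
  simp [mul_apply, commMat, Fintype.sum_prod_type, ite_and, one_apply, Prod.ext_iff]

theorem commMat_mulVec_vecM {n : ℕ} (T : Matrix (Fin n) (Fin n) ℝ) :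
    commMat n *ᵥ vecM T = vecM Tᵀ := by
  ext p
  simp [mulVec, dotProduct, commMat, vecM, Fintype.sum_prod_type, ite_and]

theorem vecM_vecMul_commMat {n : ℕ} (T : Matrix (Fin n) (Fin n) ℝ) :
    vecM T ᵥ* commMat n = vecM Tᵀ := by
  rw [← commMat_transpose, vecMul_transpose, commMat_mulVec_vecM]

theorem vecM_one_dotProduct_vecM_one (n : ℕ) :
    vecM (1 : Matrix (Fin n) (Fin n) ℝ) ⬝ᵥ vecM 1 = n := by
  simp [dotProduct, vecM, Fintype.sum_prod_type, one_apply]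

theorem Mmat_moorePenrose_inverse_general (n : ℕ) :
    let X : Matrix (Fin n × Fin n) (Fin n × Fin n) ℝ :=
      (1/4 : ℝ) • (1 + commMat n - (2/((n : ℝ) + 2)) •
        Matrix.vecMulVec (vecM (1 : Matrix (Fin n) (Fin n) ℝ))
          (vecM (1 : Matrix (Fin n) (Fin n) ℝ)))
    Mmat n * X * Mmat n = Mmat n ∧ X * Mmat n * X = X ∧
      (Mmat n * X)ᵀ = Mmat n * X ∧ (X * Mmat n)ᵀ = X * Mmat n := by
  intro X
  set v := vecM (1 : Matrix (Fin n) (Fin n) ℝ)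
  have hc := commMat_mul_self n
  have hcp : commMat n * vecMulVec v v = vecMulVec v v := by
    rw [mul_vecMulVec, commMat_mulVec_vecM, transpose_one]
  have hpc : vecMulVec v v * commMat n = vecMulVec v v := by
    rw [vecMulVec_mul, vecM_vecMul_commMat, transpose_one]
  have hp : vecMulVec v v * vecMulVec v v = (n : ℝ) • vecMulVec v v := by
    rw [vecMulVec_mul_vecMulVec, vecM_one_dotProduct_vecM_one, vecMulVec_smul]
  have hd : (n : ℝ) + 2 ≠ 0 := by positivity
  have hMX : Mmat n * X = (1/2 : ℝ) • (1 + commMat n) :=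
    one_add_add_mul_penroseCandidate hc hcp hpc hp hd
  have hXM : X * Mmat n = (1/2 : ℝ) • (1 + commMat n) :=
    penroseCandidate_mul_one_add_add hc hcp hpc hp hd
  have hsymm : ((1/2 : ℝ) • (1 + commMat n))ᵀ = (1/2 : ℝ) • (1 + commMat n) := by
    rw [transpose_smul, transpose_add, transpose_one, commMat_transpose]
  refine ⟨?_, ?_, hMX ▸ hsymm, hXM ▸ hsymm⟩
  · rw [mul_assoc, hXM]
    exact one_add_add_mul_half_one_add hc hpc
  · rw [hXM]
    exact half_one_add_mul_penroseCandidate hc hcp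

/-- `X = (1/4)(I_{n²} + C_n − (2/(n+2)) (vec I_n)(vec I_n)ᵀ)` is the Moore–Penrose
inverse of `M_n`: the four Penrose conditions hold. -/
theorem Mmat_moorePenrose_inverse (n : ℕ) (hn : 1 ≤ n) :
    let X : Matrix (Fin n × Fin n) (Fin n × Fin n) ℝ :=
      (1/4 : ℝ) • (1 + commMat n - (2/((n : ℝ) + 2)) •
        Matrix.vecMulVec (vecM (1 : Matrix (Fin n) (Fin n) ℝ))
          (vecM (1 : Matrix (Fin n) (Fin n) ℝ)))
    Mmat n * X * Mmat n = Mmat n ∧ X * Mmat n * X = X ∧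
      (Mmat n * X)ᵀ = Mmat n * X ∧ (X * Mmat n)ᵀ = X * Mmat n :=
  Mmat_moorePenrose_inverse_general n
end

section
/- Let n ≥ 2, let g ∈ ℝⁿ with g ≠ 0, let H be an (n,n) real symmetric matrix, and let N be an (n, n−1) real matrix with NᵀN = I_{n−1} and Nᵀg = 0. Then for every κ ∈ ℝ the following are equivalent: (i) there exists v ∈ ℝⁿ with ‖v‖ = 1, vᵀg = 0, and −(I_n − g gᵀ/‖g‖²) H v / ‖g‖ = κ v; (ii) there exists u ∈ ℝ^{n−1} with ‖u‖ = 1 and −(Nᵀ H N) u / ‖g‖ = κ u. -/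
open Matrix

/-! Since `Nᵀ g = 0` and `Nᵀ N = 1`, the square matrix `[N | g]` has the left inverse
`[Nᵀ ; gᵀ / ‖g‖²]`, hence this is also a right inverse: `N Nᵀ + g gᵀ / ‖g‖² = 1`. So `N Nᵀ` is the
projection `1 - g gᵀ / ‖g‖²` onto `g^⊥`, and `v ↦ Nᵀ v`, `u ↦ N u` are mutually inverse isometries
between `g^⊥` and `ℝⁿ⁻¹` that intertwine `N Nᵀ A` on `g^⊥` with `Nᵀ A N`. -/

section
variable {K : Type*} {m n : Type*} [Field K] [Fintype m] [Fintype n]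

theorem mul_transpose_eq_one_sub_vecMulVec [DecidableEq m] [DecidableEq n] (e : n ≃ m ⊕ Unit)
    {N : Matrix n m K} {g : n → K} (hN : Nᵀ * N = 1) (hNg : Nᵀ *ᵥ g = 0) (hg : g ⬝ᵥ g ≠ 0) :
    N * Nᵀ = 1 - (g ⬝ᵥ g)⁻¹ • vecMulVec g g := by
  have hLM : fromRows Nᵀ ((g ⬝ᵥ g)⁻¹ • replicateRow Unit g) * fromCols N (replicateCol Unit g)
      = 1 := by
    rw [fromRows_mul_fromCols, ← fromBlocks_one, hN, ← replicateCol_mulVec, hNg, smul_mul,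
      ← replicateRow_vecMul, ← mulVec_transpose, hNg, smul_mul, replicateRow_mul_replicateCol]
    congr
    · simp
    · ext; simp [hg]
  have hML := (fromCols_mul_fromRows_eq_one_comm e _ _ _ _).2 hLM
  rw [fromCols_mul_fromRows, Matrix.mul_smul, ← vecMulVec_eq] at hML
  exact eq_sub_of_add_eq hML

theorem one_sub_smul_vecMulVec_mulVec_eq_self_iff [DecidableEq n] {g v : n → K}
    (hg : g ⬝ᵥ g ≠ 0) : (1 - (g ⬝ᵥ g)⁻¹ • vecMulVec g g) *ᵥ v = v ↔ g ⬝ᵥ v = 0 := by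
  have hg0 : g ≠ 0 := by rintro rfl; simp at hg
  rw [sub_mulVec, one_mulVec, smul_mulVec, vecMulVec_mulVec, op_smul_eq_smul, smul_smul,
    sub_eq_self, smul_eq_zero_iff_left hg0, mul_eq_zero, inv_eq_zero, or_iff_right hg]
end

section
variable {R : Type*} {m n : Type*} [CommRing R] [Fintype m] [Fintype n] [DecidableEq m]

theorem exists_eigvec_projection_mul_iff {N : Matrix n m R} (hN : Nᵀ * N = 1)
    (A : Matrix n n R) (κ : R) :
    (∃ v, v ⬝ᵥ v = 1 ∧ (N * Nᵀ) *ᵥ v = v ∧ (N * Nᵀ * A) *ᵥ v = κ • v) ↔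
      ∃ u, u ⬝ᵥ u = 1 ∧ (Nᵀ * A * N) *ᵥ u = κ • u := by
  have hNu (u : m → R) : Nᵀ *ᵥ (N *ᵥ u) = u := by rw [mulVec_mulVec, hN, one_mulVec]
  constructor
  · rintro ⟨v, hv, hPv, hAv⟩
    refine ⟨Nᵀ *ᵥ v, ?_, ?_⟩
    · rw [dotProduct_mulVec, vecMul_transpose, mulVec_mulVec, hPv, hv]
    · calc (Nᵀ * A * N) *ᵥ (Nᵀ *ᵥ v) = (Nᵀ * A) *ᵥ ((N * Nᵀ) *ᵥ v) := by
            simp only [mulVec_mulVec, Matrix.mul_assoc]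
        _ = (Nᵀ * N * (Nᵀ * A)) *ᵥ v := by rw [hPv, hN, Matrix.one_mul]
        _ = Nᵀ *ᵥ ((N * Nᵀ * A) *ᵥ v) := by simp only [mulVec_mulVec, Matrix.mul_assoc]
        _ = κ • Nᵀ *ᵥ v := by rw [hAv, mulVec_smul]
  · rintro ⟨u, hu, hAu⟩
    refine ⟨N *ᵥ u, ?_, ?_, ?_⟩
    · rw [dotProduct_mulVec, ← mulVec_transpose, hNu, hu]
    · rw [← mulVec_mulVec, hNu]
    · calc (N * Nᵀ * A) *ᵥ (N *ᵥ u) = N *ᵥ ((Nᵀ * A * N) *ᵥ u) := by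
            simp only [mulVec_mulVec, Matrix.mul_assoc]
        _ = κ • N *ᵥ u := by rw [hAu, mulVec_smul]
end

theorem sqrt_sum_sq_eq_one_iff {ι : Type*} [Fintype ι] (v : ι → ℝ) :
    Real.sqrt (∑ i, v i ^ 2) = 1 ↔ v ⬝ᵥ v = 1 := by
  simp [Real.sqrt_eq_one, dotProduct, sq]

theorem curvature_eigenproblem_reduction_general (n : ℕ)
    (g : Fin n → ℝ) (hg : g ≠ 0)
    (H : Matrix (Fin n) (Fin n) ℝ)
    (N : Matrix (Fin n) (Fin (n - 1)) ℝ)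
    (hN1 : Nᵀ * N = 1) (hN2 : Nᵀ.mulVec g = 0) (κ : ℝ) :
    let gn : ℝ := Real.sqrt (∑ i, g i ^ 2)
    ((∃ v : Fin n → ℝ, Real.sqrt (∑ i, v i ^ 2) = 1 ∧ v ⬝ᵥ g = 0 ∧
        (-(gn⁻¹)) • ((1 - (gn ^ 2)⁻¹ • Matrix.vecMulVec g g) * H).mulVec v =
          κ • v) ↔
      (∃ u : Fin (n - 1) → ℝ, Real.sqrt (∑ i, u i ^ 2) = 1 ∧
        (-(gn⁻¹)) • (Nᵀ * H * N).mulVec u = κ • u)) := by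
  intro gn
  have hgg : g ⬝ᵥ g ≠ 0 := by rwa [Ne, dotProduct_self_eq_zero]
  have hgn : gn ^ 2 = g ⬝ᵥ g := by
    rw [Real.sq_sqrt (by positivity)]; simp [dotProduct, sq]
  have hn : n ≠ 0 := by rintro rfl; exact hg (Subsingleton.elim _ _)
  have e : Fin n ≃ Fin (n - 1) ⊕ Unit := Fintype.equivOfCardEq (by simp; omega)
  have hP : 1 - (gn ^ 2)⁻¹ • vecMulVec g g = N * Nᵀ := by
    rw [hgn, mul_transpose_eq_one_sub_vecMulVec e hN1 hN2 hgg]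
  have hOrth (v : Fin n → ℝ) : v ⬝ᵥ g = 0 ↔ (N * Nᵀ) *ᵥ v = v := by
    rw [← hP, hgn, one_sub_smul_vecMulVec_mulVec_eq_self_iff hgg, dotProduct_comm]
  simpa only [sqrt_sum_sq_eq_one_iff, hOrth, hP, Matrix.mul_smul, Matrix.smul_mul, smul_mulVec]
    using exists_eigvec_projection_mul_iff hN1 (-(gn⁻¹) • H) κ

/-- Reduction of the principal-curvature eigenproblem: for `g ≠ 0`, symmetric
`H`, and `N` an orthonormal basis of `g^⊥`, `κ` is an eigenvalue of
`−(I − ggᵀ/‖g‖²)H/‖g‖` on `g^⊥` iff it is an eigenvalue of `−NᵀHN/‖g‖`. -/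
theorem curvature_eigenproblem_reduction (n : ℕ) (hn : 2 ≤ n)
    (g : Fin n → ℝ) (hg : g ≠ 0)
    (H : Matrix (Fin n) (Fin n) ℝ) (hH : H.IsSymm)
    (N : Matrix (Fin n) (Fin (n - 1)) ℝ)
    (hN1 : Nᵀ * N = 1) (hN2 : Nᵀ.mulVec g = 0) (κ : ℝ) :
    let gn : ℝ := Real.sqrt (∑ i, g i ^ 2)
    ((∃ v : Fin n → ℝ, Real.sqrt (∑ i, v i ^ 2) = 1 ∧ v ⬝ᵥ g = 0 ∧
        (-(gn⁻¹)) • ((1 - (gn ^ 2)⁻¹ • Matrix.vecMulVec g g) * H).mulVec v =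
          κ • v) ↔
      (∃ u : Fin (n - 1) → ℝ, Real.sqrt (∑ i, u i ^ 2) = 1 ∧
        (-(gn⁻¹)) • (Nᵀ * H * N).mulVec u = κ • u)) :=
  curvature_eigenproblem_reduction_general n g hg H N hN1 hN2 κ
end

section
/- Let n ≥ 1 and v > 0, and let μ be the n-fold product on ℝⁿ of the real Gaussian measure with mean 0 and variance v. Then the pushforward of μ under the Euclidean norm map x ↦ ‖x‖ is the measure on ℝ with density u ↦ 2 u^{n−1} exp(−u²/(2v)) / ( (2v)^{n/2} Γ(n/2) ) for u > 0 (and density 0 for u ≤ 0) with respect to Lebesgue measure. -/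
open MeasureTheory ProbabilityTheory

open scoped ENNReal NNReal Real

section Aux

/-- Lintegral of a product of functions of separate coordinates over a pi measure. -/
lemma lintegral_pi_prod_aux {n : ℕ} (g : Fin n → ℝ → ℝ≥0∞) (hg : ∀ i, Measurable (g i)) :
    ∫⁻ x : Fin n → ℝ, ∏ i, g i (x i) ∂(Measure.pi fun _ => volume) = ∏ i, ∫⁻ x, g i x := by
  induction n with
  | zero => simp
  | succ m ih =>
    have hmp := (measurePreserving_piFinSuccAbove (fun _ : Fin (m + 1) => (volume : Measure ℝ))
      0).symm
    have hmeas : Measurable fun x : Fin (m + 1) → ℝ => ∏ i, g i (x i) :=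
      Finset.measurable_prod _ fun i _ => (hg i).comp (measurable_pi_apply i)
    rw [← hmp.lintegral_comp hmeas]
    have heq : ∀ p : ℝ × (Fin m → ℝ),
        (∏ i, g i (((MeasurableEquiv.piFinSuccAbove (fun _ => ℝ) 0).symm p) i)) =
          g 0 p.1 * ∏ j, g (Fin.succ j) (p.2 j) := by
      intro p
      simp_rw [MeasurableEquiv.piFinSuccAbove_symm_apply, Fin.insertNthEquiv,
        Equiv.coe_fn_mk, Fin.insertNth_zero, Fin.prod_univ_succ, Fin.cons_zero, Fin.cons_succ]
      simp [Fin.zero_succAbove]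
    simp_rw [heq]
    rw [lintegral_prod_mul (f := g 0) (g := fun y : Fin m → ℝ => ∏ j, g (Fin.succ j) (y j))
      (hg 0).aemeasurable
      (Finset.measurable_prod _ fun j _ => (hg _).comp (measurable_pi_apply j)).aemeasurable,
      ih (fun j => g (Fin.succ j)) (fun j => hg _), Fin.prod_univ_succ]

/-- Pushing forward a density along a map. -/
lemma map_withDensity_comp_aux {α β : Type*} [MeasurableSpace α] [MeasurableSpace β]
    (μ : Measure α) (N : α → β) (hN : Measurable N) (g : β → ℝ≥0∞) (hg : Measurable g) :
    (μ.withDensity (fun x => g (N x))).map N = (μ.map N).withDensity g := by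
  ext s hs
  rw [Measure.map_apply hN hs, withDensity_apply _ (hN hs), withDensity_apply _ hs,
    setLIntegral_map hs hg hN]

/-- Polar-type formula for the lintegral of a radial function over Euclidean space. -/
lemma lintegral_fun_norm_eucl (n : ℕ) (hn : 1 ≤ n) (f : ℝ → ℝ≥0∞) (hf : Measurable f) :
    ∫⁻ x : EuclideanSpace ℝ (Fin n), f ‖x‖ =
      (volume : Measure (EuclideanSpace ℝ (Fin n))).toSphere Set.univ *
        ∫⁻ r in Set.Ioi (0 : ℝ), ENNReal.ofReal (r ^ (n - 1)) * f r := by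
  haveI : Nonempty (Fin n) := ⟨⟨0, hn⟩⟩
  have hdim : Module.finrank ℝ (EuclideanSpace ℝ (Fin n)) = n := by
    simp [finrank_euclideanSpace]
  calc
    ∫⁻ x : EuclideanSpace ℝ (Fin n), f ‖x‖
        = ∫⁻ x in ({0}ᶜ : Set (EuclideanSpace ℝ (Fin n))), f ‖x‖ ∂volume := by
      rw [MeasureTheory.restrict_compl_singleton]
    _ = ∫⁻ x : ({0}ᶜ : Set (EuclideanSpace ℝ (Fin n))), f ‖(x : EuclideanSpace ℝ (Fin n))‖
          ∂((volume : Measure (EuclideanSpace ℝ (Fin n))).comap Subtype.val) :=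
      (lintegral_subtype_comap (measurableSet_singleton (0 : EuclideanSpace ℝ (Fin n))).compl
        (fun a => f ‖a‖)).symm
    _ = ∫⁻ p : Metric.sphere (0 : EuclideanSpace ℝ (Fin n)) 1 × Set.Ioi (0 : ℝ), f p.2
        ∂((volume : Measure (EuclideanSpace ℝ (Fin n))).toSphere.prod
          (Measure.volumeIoiPow (Module.finrank ℝ (EuclideanSpace ℝ (Fin n)) - 1))) :=
      by
        have := (Measure.measurePreserving_homeomorphUnitSphereProd
          (volume : Measure (EuclideanSpace ℝ (Fin n)))).lintegral_comp
          (hf.comp (measurable_subtype_coe.comp measurable_snd))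
        simpa [Function.comp_def, homeomorphUnitSphereProd_apply_snd_coe] using this
    _ = (volume : Measure (EuclideanSpace ℝ (Fin n))).toSphere Set.univ *
        ∫⁻ r : Set.Ioi (0 : ℝ), f r
          ∂(Measure.volumeIoiPow (Module.finrank ℝ (EuclideanSpace ℝ (Fin n)) - 1)) := by
      rw [lintegral_prod
        (fun p : Metric.sphere (0 : EuclideanSpace ℝ (Fin n)) 1 × Set.Ioi (0 : ℝ) => f p.2)
        ((hf.comp (measurable_subtype_coe.comp measurable_snd) :
          Measurable fun p : Metric.sphere (0 : EuclideanSpace ℝ (Fin n)) 1 × Set.Ioi (0 : ℝ) =>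
            f p.2).aemeasurable)]
      simp [lintegral_const, mul_comm]
    _ = _ := by
      rw [hdim]
      congr 1
      rw [Measure.volumeIoiPow,
        lintegral_withDensity_eq_lintegral_mul (g := fun r : Set.Ioi (0 : ℝ) => f r) _
          ((measurable_subtype_coe.pow_const _).ennreal_ofReal)
          (hf.comp measurable_subtype_coe)]
      exact lintegral_subtype_comap measurableSet_Ioi
        (fun a => ENNReal.ofReal (a ^ (n - 1)) * f a)

end Aux

/-- The pushforward of the `n`-fold product of the centered Gaussian with
variance `v` under the Euclidean norm is the χ-type measure with density
`u ↦ 2 u^{n−1} exp(−u²/(2v)) / ((2v)^{n/2} Γ(n/2))` on `(0,∞)`. -/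
theorem map_norm_gaussian_pi (n : ℕ) (hn : 1 ≤ n) (v : ℝ) (hv : 0 < v) :
    (Measure.pi fun _ : Fin n => gaussianReal 0 ⟨v, hv.le⟩).map
        (fun x => Real.sqrt (∑ i, x i ^ 2)) =
      volume.withDensity fun u : ℝ =>
        if 0 < u then
          ENNReal.ofReal
            (2 * u ^ (n - 1) * Real.exp (-u ^ 2 / (2 * v)) /
              ((2 * v) ^ ((n : ℝ) / 2) * Real.Gamma ((n : ℝ) / 2)))
        else 0 := by
  haveI : Nonempty (Fin n) := ⟨⟨0, hn⟩⟩
  have hv' : (⟨v, hv.le⟩ : ℝ≥0) ≠ 0 := by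
    intro h
    have h : v = 0 := congrArg Subtype.val h
    exact hv.ne' h
  have hvcoe : ((⟨v, hv.le⟩ : ℝ≥0) : ℝ) = v := rfl
  set N : (Fin n → ℝ) → ℝ := fun x => Real.sqrt (∑ i, x i ^ 2) with hN
  have hNm : Measurable N := by fun_prop
  set g : ℝ → ℝ≥0∞ := fun r =>
    ENNReal.ofReal ((Real.sqrt (2 * Real.pi * v))⁻¹ ^ n * Real.exp (-r ^ 2 / (2 * v))) with hg
  have hgm : Measurable g := by fun_prop
  -- Step 1 : the product of Gaussians as a density w.r.t. Lebesgue
  have h1 : (Measure.pi fun _ : Fin n => gaussianReal 0 ⟨v, hv.le⟩) =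
      (volume : Measure (Fin n → ℝ)).withDensity fun x => g (N x) := by
    have hpi : (Measure.pi fun _ : Fin n => gaussianReal 0 ⟨v, hv.le⟩) =
        (volume : Measure (Fin n → ℝ)).withDensity
          (fun x => ∏ i, gaussianPDF 0 ⟨v, hv.le⟩ (x i)) := by
      haveI : IsProbabilityMeasure (gaussianReal 0 ⟨v, hv.le⟩) :=
        instIsProbabilityMeasureGaussianReal 0 _
      refine Measure.pi_eq fun s hs => ?_
      rw [withDensity_apply _ (MeasurableSet.univ_pi hs),
        ← lintegral_indicator (MeasurableSet.univ_pi hs)]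
      have hind : ∀ x : Fin n → ℝ,
          (Set.univ.pi s).indicator (fun x => ∏ i, gaussianPDF 0 ⟨v, hv.le⟩ (x i)) x
            = ∏ i, (s i).indicator (gaussianPDF 0 ⟨v, hv.le⟩) (x i) := by
        intro x
        by_cases hx : x ∈ Set.univ.pi s
        · rw [Set.indicator_of_mem hx]
          exact Finset.prod_congr rfl fun i _ =>
            (Set.indicator_of_mem (hx i (Set.mem_univ i)) _).symm
        · rw [Set.indicator_of_notMem hx]
          rw [Set.mem_univ_pi] at hx
          push_neg at hx
          obtain ⟨i, hi⟩ := hx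
          exact (Finset.prod_eq_zero (Finset.mem_univ i)
            (Set.indicator_of_notMem hi _)).symm
      simp_rw [hind]
      rw [volume_pi, lintegral_pi_prod_aux _
        (fun i => (measurable_gaussianPDF 0 ⟨v, hv.le⟩).indicator (hs i))]
      refine Finset.prod_congr rfl fun i _ => ?_
      rw [lintegral_indicator (hs i), gaussianReal_of_var_ne_zero 0 hv',
        withDensity_apply _ (hs i)]
    rw [hpi]
    congr 1
    funext x
    rw [hg]
    simp only [gaussianPDF, gaussianPDFReal, sub_zero, hvcoe]
    rw [← ENNReal.ofReal_prod_of_nonneg (fun i _ => by positivity)]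
    congr 1
    rw [Finset.prod_mul_distrib, Finset.prod_const, ← Real.exp_sum, Finset.card_univ,
      Fintype.card_fin]
    congr 1
    have hNx : N x ^ 2 = ∑ i, x i ^ 2 :=
      Real.sq_sqrt (Finset.sum_nonneg fun i _ => sq_nonneg _)
    rw [hNx, ← Finset.sum_div, Finset.sum_neg_distrib]
    rfl
  -- Steps 2-3 : push the density through the norm map
  rw [h1, map_withDensity_comp_aux _ N hNm g hgm]
  have h3 : (volume : Measure (Fin n → ℝ)).map N =
      (volume : Measure (EuclideanSpace ℝ (Fin n))).map (fun x => ‖x‖) := by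
    rw [← (EuclideanSpace.volume_preserving_symm_measurableEquiv_toLp (Fin n)).map_eq,
      Measure.map_map hNm (MeasurableEquiv.toLp 2 (Fin n → ℝ)).symm.measurable]
    congr 1
    funext y
    show Real.sqrt (∑ i, ((MeasurableEquiv.toLp 2 (Fin n → ℝ)).symm y) i ^ 2) = ‖y‖
    rw [EuclideanSpace.norm_eq]
    congr 1
    refine Finset.sum_congr rfl fun i _ => ?_
    rw [Real.norm_eq_abs, sq_abs]
    rfl
  -- Step 4 : the pushforward of Lebesgue measure under the norm
  have h4 : (volume : Measure (EuclideanSpace ℝ (Fin n))).map (fun x => ‖x‖) =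
      volume.withDensity fun r : ℝ => Set.indicator (Set.Ioi 0)
        (fun r => (volume : Measure (EuclideanSpace ℝ (Fin n))).toSphere Set.univ *
          ENNReal.ofReal (r ^ (n - 1))) r := by
    ext s hs
    rw [Measure.map_apply (by fun_prop) hs, withDensity_apply _ hs]
    have hpre : volume ((fun x : EuclideanSpace ℝ (Fin n) => ‖x‖) ⁻¹' s) =
        ∫⁻ x : EuclideanSpace ℝ (Fin n), s.indicator (1 : ℝ → ℝ≥0∞) ‖x‖ := by
      rw [← lintegral_indicator_one (measurable_norm hs)]
      exact lintegral_congr fun x => by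
        by_cases h : ‖x‖ ∈ s <;> simp [Set.indicator_apply, h]
    rw [hpre, lintegral_fun_norm_eucl n hn _ (measurable_one.indicator hs),
      ← lintegral_const_mul (f := fun r : ℝ => ENNReal.ofReal (r ^ (n - 1)) *
          s.indicator (1 : ℝ → ℝ≥0∞) r) _
        ((by fun_prop : Measurable fun r : ℝ => ENNReal.ofReal (r ^ (n - 1))).mul
          (measurable_one.indicator hs)),
      ← lintegral_indicator measurableSet_Ioi, ← lintegral_indicator hs]
    refine lintegral_congr fun r => ?_
    by_cases hr : r ∈ Set.Ioi (0 : ℝ) <;> by_cases hrs : r ∈ s <;>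
      simp [Set.indicator_apply, hr, hrs, mul_comm]
  rw [h3, h4, ← withDensity_mul (f := fun r : ℝ => Set.indicator (Set.Ioi 0)
      (fun r => (volume : Measure (EuclideanSpace ℝ (Fin n))).toSphere Set.univ *
        ENNReal.ofReal (r ^ (n - 1))) r) _
    ((measurable_const.mul
      (by fun_prop : Measurable fun r : ℝ => ENNReal.ofReal (r ^ (n - 1)))).indicator
      measurableSet_Ioi) hgm]
  -- Step 5 : identify the densities
  congr 1
  funext r
  by_cases hr : 0 < r
  · rw [Pi.mul_apply, Set.indicator_of_mem (Set.mem_Ioi.mpr hr), if_pos hr, hg,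
      Measure.toSphere_apply_univ, EuclideanSpace.volume_ball]
    simp only [finrank_euclideanSpace, Fintype.card_fin, ENNReal.ofReal_one, one_pow, one_mul]
    rw [← ENNReal.ofReal_natCast n,
      ← ENNReal.ofReal_mul (by positivity),
      ← ENNReal.ofReal_mul (by positivity),
      ← ENNReal.ofReal_mul (by positivity)]
    congr 1
    have hπ : (0 : ℝ) < Real.pi := Real.pi_pos
    have h2v : (0 : ℝ) < 2 * v := by linarith
    have hn2 : (0 : ℝ) < (n : ℝ) / 2 := by
      have : (0 : ℝ) < (n : ℝ) := by exact_mod_cast hn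
      linarith
    have hsqpi : Real.sqrt Real.pi ^ n = Real.pi ^ ((n : ℝ) / 2) := by
      rw [Real.sqrt_eq_rpow, ← Real.rpow_natCast (Real.pi ^ ((1 : ℝ)/2)) n,
        ← Real.rpow_mul hπ.le]
      congr 1
      ring
    have hsq2 : (Real.sqrt (2 * Real.pi * v))⁻¹ ^ n =
        ((2 * Real.pi * v) ^ ((n : ℝ) / 2))⁻¹ := by
      rw [inv_pow]
      congr 1
      rw [Real.sqrt_eq_rpow, ← Real.rpow_natCast ((2 * Real.pi * v) ^ ((1 : ℝ)/2)) n,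
        ← Real.rpow_mul (by positivity)]
      congr 1
      ring
    have hmulrpow : (2 * Real.pi * v) ^ ((n : ℝ) / 2) =
        (2 * v) ^ ((n : ℝ) / 2) * Real.pi ^ ((n : ℝ) / 2) := by
      rw [← Real.mul_rpow h2v.le hπ.le]
      congr 1
      ring
    have hΓ : Real.Gamma ((n : ℝ) / 2 + 1) = ((n : ℝ) / 2) * Real.Gamma ((n : ℝ) / 2) :=
      Real.Gamma_add_one hn2.ne'
    have hΓpos : 0 < Real.Gamma ((n : ℝ) / 2) := Real.Gamma_pos_of_pos hn2
    have hpipos : (0 : ℝ) < Real.pi ^ ((n : ℝ) / 2) := Real.rpow_pos_of_pos hπ _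
    have h2vpos : (0 : ℝ) < (2 * v) ^ ((n : ℝ) / 2) := Real.rpow_pos_of_pos h2v _
    rw [hsqpi, hsq2, hΓ, hmulrpow]
    field_simp
  · rw [Pi.mul_apply, Set.indicator_of_notMem (by simpa using hr), if_neg hr, zero_mul]
end

section
/- Let ρ : ℝ → ℝ be four times continuously differentiable and even (ρ(−u) = ρ(u) for all u), and define r : [0,∞) → ℝ by r(t) = ρ(√t). Then r is differentiable at 0 from the right with r'(0) = ρ''(0)/2; moreover, the function r' (equal to ρ'(√t)/(2√t) for t > 0 and to ρ''(0)/2 at t = 0) is differentiable at 0 from the right with derivative ρ''''(0)/12. -/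
open Filter Set Topology
open scoped Nat

/-! Since `ρ` is even, its odd derivatives vanish at `0`, so Taylor's theorem gives
`ρ x = ρ 0 + ρ'' 0 * x ^ 2 / 2 + o(x ^ 2)` and `ρ' x = ρ'' 0 * x + ρ'''' 0 * x ^ 3 / 6 + o(x ^ 3)`.
At `t = x ^ 2` the difference quotients of `r` and of `r'` at `0` are `(ρ x - ρ 0) / x ^ 2` and
`(ρ' x - ρ'' 0 * x) / (2 * x ^ 3)`, which therefore tend to `ρ'' 0 / 2` and `ρ'''' 0 / 12`. -/

namespace Function

variable {𝕜 F : Type*} [NontriviallyNormedField 𝕜] [NormedAddCommGroup F] [NormedSpace 𝕜 F]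
  {f : 𝕜 → F}

lemma Even.deriv (hf : f.Even) : (deriv f).Odd := fun x => by
  simpa [funext hf] using deriv_comp_neg (f := f) (x := -x)

lemma Odd.deriv (hf : f.Odd) : (deriv f).Even := fun x => by
  simpa [funext hf] using (deriv_comp_neg (f := f) (x := x)).symm

end Function

theorem tendsto_sub_taylor_div_pow_nhdsNE {f : ℝ → ℝ} {n : ℕ} {x₀ : ℝ} (hf : ContDiff ℝ n f) :
    Tendsto (fun x => (f x - ∑ k ∈ Finset.range n, iteratedDeriv k f x₀ / k ! * (x - x₀) ^ k) /
      (x - x₀) ^ n) (𝓝[≠] x₀) (𝓝 (iteratedDeriv n f x₀ / n !)) := by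
  have h := (Real.taylor_tendsto convex_univ (mem_univ x₀) hf.contDiffOn).mono_left
    (nhdsWithin_mono x₀ (subset_univ {x₀}ᶜ))
  rw [← zero_add (iteratedDeriv n f x₀ / n !)]
  refine (h.add_const _).congr' ?_
  filter_upwards [self_mem_nhdsWithin] with x hx
  have hx : (x - x₀) ^ n ≠ 0 := pow_ne_zero _ (sub_ne_zero.mpr hx)
  rw [taylor_within_apply, Finset.sum_range_succ]
  simp only [iteratedDerivWithin_univ, smul_eq_mul, div_mul_eq_mul_div, inv_mul_eq_div,
    mul_comm (iteratedDeriv _ f x₀)]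
  field_simp
  ring

theorem hasDerivWithinAt_Ici_zero_of_tendsto_comp_sq {g : ℝ → ℝ} {L : ℝ}
    (h : Tendsto (fun x => (g (x ^ 2) - g 0) / x ^ 2) (𝓝[>] 0) (𝓝 L)) :
    HasDerivWithinAt g L (Ici 0) 0 := by
  have hsqrt : Tendsto Real.sqrt (𝓝[>] 0) (𝓝[>] 0) :=
    tendsto_nhdsWithin_of_tendsto_nhds_of_eventually_within _
      (by simpa using (Real.continuous_sqrt.tendsto 0).mono_left nhdsWithin_le_nhds)
      (eventually_nhdsWithin_of_forall fun _ => Real.sqrt_pos.mpr)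
  rw [hasDerivWithinAt_iff_tendsto_slope, Ici_sdiff_left]
  refine (h.comp hsqrt).congr' ?_
  filter_upwards [self_mem_nhdsWithin] with t ht
  simp [slope_def_field, Real.sq_sqrt (le_of_lt ht)]

/-- For `ρ` even and `C⁴`, the function `r(t) = ρ(√t)` has right derivative
`ρ''(0)/2` at `0`, and its derivative function (extended by this value at `0`)
has right derivative `ρ''''(0)/12` at `0`. -/
theorem radial_reparametrization_smooth_at_zero (ρ : ℝ → ℝ)
    (hρ : ContDiff ℝ 4 ρ) (heven : ∀ u : ℝ, ρ (-u) = ρ u) :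
    HasDerivWithinAt (fun t => ρ (Real.sqrt t)) (deriv (deriv ρ) 0 / 2)
      (Set.Ici 0) 0 ∧
    HasDerivWithinAt
      (fun t => if t = 0 then deriv (deriv ρ) 0 / 2
        else deriv ρ (Real.sqrt t) / (2 * Real.sqrt t))
      (deriv (deriv (deriv (deriv ρ))) 0 / 12) (Set.Ici 0) 0 := by
  have hodd₁ : (deriv ρ).Odd := Function.Even.deriv heven
  have hodd₃ : (deriv (deriv (deriv ρ))).Odd := hodd₁.deriv.deriv
  have taylor₂ : Tendsto (fun x => (ρ x - ρ 0) / x ^ 2) (𝓝[≠] 0) (𝓝 (deriv (deriv ρ) 0 / 2)) := by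
    simpa [Finset.sum_range_succ, iteratedDeriv_succ, hodd₁.map_zero, Nat.factorial] using
      tendsto_sub_taylor_div_pow_nhdsNE (x₀ := 0) (hρ.of_le (by norm_num) : ContDiff ℝ 2 ρ)
  have taylor₃ : Tendsto (fun x => (deriv ρ x - deriv (deriv ρ) 0 * x) / x ^ 3) (𝓝[≠] 0)
      (𝓝 (deriv (deriv (deriv (deriv ρ))) 0 / 6)) := by
    simpa [Finset.sum_range_succ, iteratedDeriv_succ, hodd₁.map_zero, hodd₃.map_zero,
      Nat.factorial] using
      tendsto_sub_taylor_div_pow_nhdsNE (x₀ := 0) (hρ.deriv' : ContDiff ℝ 3 (deriv ρ))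
  constructor
  · refine hasDerivWithinAt_Ici_zero_of_tendsto_comp_sq
      ((taylor₂.mono_left (nhdsGT_le_nhdsNE 0)).congr' ?_)
    filter_upwards [self_mem_nhdsWithin] with x (hx : 0 < x)
    simp [Real.sqrt_sq hx.le]
  · have half := (taylor₃.div_const 2).mono_left (nhdsGT_le_nhdsNE 0)
    rw [div_div, show (6 : ℝ) * 2 = 12 by norm_num] at half
    refine hasDerivWithinAt_Ici_zero_of_tendsto_comp_sq (half.congr' ?_)
    filter_upwards [self_mem_nhdsWithin] with x (hx : 0 < x)
    simp only [ne_eq, OfNat.ofNat_ne_zero, not_false_eq_true, pow_eq_zero_iff, hx.ne', ↓reduceIte,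
      Real.sqrt_sq hx.le]
    field_simp
end
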